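/- Let D be an integral domain with quotient field K and X an indeterminate over K. Then D is condensed if and only if D + XK[X] is condensed. -/

import Mathlib

/-- An integral domain is condensed if for every pair of nonzero ideals `I, J`,
the product `I*J` equals the set of products `{i*j : i ∈ I, j ∈ J}`. -/
def IsCondensed (D : Type*) [CommRing D] : Prop :=
  ∀ I J : Ideal D, I ≠ ⊥ → J ≠ ⊥ → ∀ x ∈ I * J, ∃ i ∈ I, ∃ j ∈ J, x = i * j

/-- The ring `A + X·B[X]`: polynomials over `B` whose constant coefficient lies
in the subring `A`. -/
def constSubring {B : Type*} [CommRing B] (A : Subring B) : Subring (Polynomial B) where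
  carrier := {f | f.coeff 0 ∈ A}
  zero_mem' := by simpa using zero_mem A
  one_mem' := by simpa using one_mem A
  add_mem' := by
    intro f g hf hg
    simpa using add_mem hf hg
  neg_mem' := by
    intro f hf
    simpa using A.neg_mem hf
  mul_mem' := by
    intro f g hf hg
    simpa [Polynomial.mul_coeff_zero] using mul_mem hf hg

/-- `D + X·K[X]` where `K` is the quotient field of `D`. -/
noncomputable def DplusXKX (D : Type*) [CommRing D] [IsDomain D] :
    Subring (Polynomial (FractionRing D)) :=
  constSubring (algebraMap D (FractionRing D)).range

/-!
If `R = D + X K[X]`, the constants `D → R` and the constant coefficient `R → D` make `D` a retract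
of `R`, and condensedness passes to retracts.

Conversely, let `𝔄` be a nonzero ideal of `R` and `p` a generator of the ideal `𝔄 K[X]` of the
PID `K[X]`. Since `X K[X] ⊆ R`, we get `p X K[X] ⊆ 𝔄 ⊆ p K[X]`, so `𝔄 = p (V + X K[X])` for the
`D`-submodule `V = {c | p c ∈ 𝔄}` of `K`, and `V ≠ 0` because `p` is a gcd of `𝔄`. Clearing
denominators shows that a condensed `D` also factors every `u ∈ V W` as `v w` with `v ∈ V`,
`w ∈ W`, for `D`-submodules of `K`. An element of `𝔄 𝔅` then has the form `s t (v w + X k)`, which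
is `(s v) · t (w + X v⁻¹ k)` with `v ≠ 0`.
-/

open Polynomial nonZeroDivisors Pointwise

theorem IsCondensed.of_leftInverse {R S : Type*} [CommRing R] [CommRing S] (f : R →+* S)
    (g : S →+* R) (hgf : Function.LeftInverse g f) (hS : IsCondensed S) : IsCondensed R := by
  intro I J hI hJ x hx
  have map_ne_bot {I : Ideal R} (hI : I ≠ ⊥) : I.map f ≠ ⊥ := by
    rwa [Ne, Ideal.map_eq_bot_iff_of_injective hgf.injective]
  have map_map_eq (I : Ideal R) : (I.map f).map g = I := by
    rw [Ideal.map_map, show g.comp f = RingHom.id R from RingHom.ext hgf, Ideal.map_id]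
  have hfx : f x ∈ I.map f * J.map f := Ideal.map_mul f I J ▸ Ideal.mem_map_of_mem f hx
  obtain ⟨a, ha, b, hb, hab⟩ := hS _ _ (map_ne_bot hI) (map_ne_bot hJ) _ hfx
  refine ⟨g a, map_map_eq I ▸ Ideal.mem_map_of_mem g ha,
    g b, map_map_eq J ▸ Ideal.mem_map_of_mem g hb, ?_⟩
  rw [← map_mul, ← hab, hgf x]

section constSubring

variable {B : Type*} [CommRing B] (A : Subring B)

theorem mem_constSubring {f : B[X]} : f ∈ constSubring A ↔ f.coeff 0 ∈ A := Iff.rfl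

theorem X_mul_mem_constSubring (q : B[X]) : X * q ∈ constSubring A := by
  simp [mem_constSubring, zero_mem]

theorem C_mem_constSubring {a : B} (ha : a ∈ A) : C a ∈ constSubring A := by
  simpa [mem_constSubring] using ha

noncomputable def constSubring.constantCoeff : constSubring A →+* A :=
  (Polynomial.constantCoeff.comp (constSubring A).subtype).codRestrict A fun f => f.2

noncomputable def constSubring.C : A →+* constSubring A :=
  (Polynomial.C.comp A.subtype).codRestrict _ fun a => C_mem_constSubring A a.2

theorem IsCondensed.of_constSubring (h : IsCondensed (constSubring A)) : IsCondensed A :=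
  h.of_leftInverse (constSubring.C A) (constSubring.constantCoeff A) fun a =>
    Subtype.ext (coeff_C_zero (a := (a : B)))

end constSubring

section FractionField

variable {D K : Type*} [CommRing D] [IsDomain D] [Field K] [Algebra D K] [IsFractionRing D K]

theorem IsCondensed.exists_mul_eq_of_mem_mul (hD : IsCondensed D) {V W : Submodule D K} {u : K}
    (hu : u ∈ V * W) : ∃ v ∈ V, ∃ w ∈ W, u = v * w := by
  rcases eq_or_ne u 0 with rfl | hu0
  · exact ⟨0, V.zero_mem, 0, W.zero_mem, (mul_zero 0).symm⟩
  -- `u` lies in the product of finitely generated submodules; clear their denominators by `b`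
  -- and `c`, and factor `b c u` in `D` with respect to the ideals `D ∩ b V` and `D ∩ c W`.
  obtain ⟨T, T', hT, hT', huT⟩ := Submodule.mem_span_mul_finite_of_mem_mul hu
  obtain ⟨b, hb⟩ := IsLocalization.exist_integer_multiples_of_finset D⁰ T
  obtain ⟨c, hc⟩ := IsLocalization.exist_integer_multiples_of_finset D⁰ T'
  set I : Ideal D := ((b : D) • V).comap (Algebra.linearMap D K)
  set J : Ideal D := ((c : D) • W).comap (Algebra.linearMap D K)
  have hbc : algebraMap D K (b * c) ≠ 0 :=
    IsFractionRing.to_map_ne_zero_of_mem_nonZeroDivisors (b * c).2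
  obtain ⟨x, hx, hxu⟩ : ∃ x ∈ I * J, algebraMap D K x = algebraMap D K (b * c) * u := by
    suffices Submodule.span D (T * T' : Set K) ≤ (Submodule.map (Algebra.linearMap D K)
        (I * J)).comap (LinearMap.mulLeft D (algebraMap D K (b * c))) from this huT
    rw [Submodule.span_le]
    rintro _ ⟨t, ht, t', ht', rfl⟩
    obtain ⟨a, ha⟩ := hb t ht
    obtain ⟨a', ha'⟩ := hc t' ht'
    refine ⟨a * a', Ideal.mul_mem_mul ?_ ?_, ?_⟩
    · exact (Submodule.mem_smul_pointwise_iff_exists _ _ _).2 ⟨t, hT ht, ha.symm⟩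
    · exact (Submodule.mem_smul_pointwise_iff_exists _ _ _).2 ⟨t', hT' ht', ha'.symm⟩
    · simp only [Algebra.linearMap_apply, map_mul, ha, ha', Algebra.smul_def,
        LinearMap.mulLeft_apply]
      ring
  have hIJ : I * J ≠ ⊥ := by
    refine (Submodule.ne_bot_iff _).2 ⟨x, hx, ?_⟩
    rintro rfl
    exact mul_ne_zero hbc hu0 (by rw [← hxu, map_zero])
  obtain ⟨i, hi, j, hj, rfl⟩ :=
    hD I J (ne_bot_of_le_ne_bot hIJ Ideal.mul_le_left) (ne_bot_of_le_ne_bot hIJ Ideal.mul_le_right)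
      x hx
  obtain ⟨v, hv, hvi⟩ := (Submodule.mem_smul_pointwise_iff_exists _ _ _).1 hi
  obtain ⟨w, hw, hwj⟩ := (Submodule.mem_smul_pointwise_iff_exists _ _ _).1 hj
  refine ⟨v, hv, w, hw, mul_left_cancel₀ hbc ?_⟩
  rw [Algebra.linearMap_apply, Algebra.smul_def] at hvi hwj
  rw [← hxu, map_mul, ← hvi, ← hwj, map_mul]
  ring

theorem IsCondensed.exists_ne_zero_mul_eq_of_mem_mul (hD : IsCondensed D) {V W : Submodule D K}
    (hV : V ≠ ⊥) {u : K} (hu : u ∈ V * W) : ∃ v ∈ V, v ≠ 0 ∧ ∃ w ∈ W, u = v * w := by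
  rcases eq_or_ne u 0 with rfl | hu0
  · obtain ⟨v, hv, hv0⟩ := (Submodule.ne_bot_iff V).1 hV
    exact ⟨v, hv, hv0, 0, W.zero_mem, (mul_zero v).symm⟩
  obtain ⟨v, hv, w, hw, rfl⟩ := hD.exists_mul_eq_of_mem_mul hu
  exact ⟨v, hv, left_ne_zero_of_mul hu0, w, hw, rfl⟩

end FractionField

section mulConstAddX

variable {D K : Type*} [CommRing D] [Field K] [Algebra D K]

/-- The set `s · (V + X K[X])`. -/
def mulConstAddX (s : K[X]) (V : Submodule D K) : Set K[X] :=
  {f | ∃ c ∈ V, ∃ q, f = s * (C c + X * q)}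

theorem add_mem_mulConstAddX {s f g : K[X]} {V : Submodule D K} (hf : f ∈ mulConstAddX s V)
    (hg : g ∈ mulConstAddX s V) : f + g ∈ mulConstAddX s V := by
  obtain ⟨c, hc, q, rfl⟩ := hf
  obtain ⟨c', hc', q', rfl⟩ := hg
  exact ⟨c + c', V.add_mem hc hc', q + q', by rw [C_add]; ring⟩

theorem mul_mem_mulConstAddX {s t f g : K[X]} {V W : Submodule D K}
    (hf : f ∈ mulConstAddX s V) (hg : g ∈ mulConstAddX t W) :
    f * g ∈ mulConstAddX (s * t) (V * W) := by
  obtain ⟨v, hv, q, rfl⟩ := hf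
  obtain ⟨w, hw, q', rfl⟩ := hg
  exact ⟨v * w, Submodule.mul_mem_mul hv hw, C v * q' + C w * q + X * q * q', by
    rw [C_mul]; ring⟩

theorem exists_mul_eq_of_mem_mulConstAddX {s t h : K[X]} {V W : Submodule D K}
    (hVW : ∀ u ∈ V * W, ∃ v ∈ V, v ≠ 0 ∧ ∃ w ∈ W, u = v * w)
    (hh : h ∈ mulConstAddX (s * t) (V * W)) :
    ∃ f ∈ mulConstAddX s V, ∃ g ∈ mulConstAddX t W, h = f * g := by
  obtain ⟨u, hu, k, rfl⟩ := hh
  obtain ⟨v, hv, hv0, w, hw, rfl⟩ := hVW u hu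
  refine ⟨s * C v, ⟨v, hv, 0, by ring⟩, t * (C w + X * (C v⁻¹ * k)), ⟨w, hw, _, rfl⟩, ?_⟩
  have hvv : C v * C v⁻¹ = (1 : K[X]) := by rw [← C_mul, mul_inv_cancel₀ hv0, C_1]
  rw [C_mul]
  linear_combination (-(s * t * X * k)) * hvv

variable (𝔄 : Ideal (constSubring (algebraMap D K).range))

theorem X_mul_mul_mem_image_of_mem_map {g : K[X]} (hg : g ∈ 𝔄.map (Subring.subtype _))
    (k : K[X]) : X * k * g ∈ Subtype.val '' (𝔄 : Set (constSubring (algebraMap D K).range)) := by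
  induction hg using Submodule.span_induction generalizing k with
  | mem g hg =>
    obtain ⟨f, hf, rfl⟩ := hg
    exact ⟨⟨X * k, X_mul_mem_constSubring _ k⟩ * f, 𝔄.mul_mem_left _ hf, by simp⟩
  | zero => exact ⟨0, 𝔄.zero_mem, by simp⟩
  | add g g' _ _ hg hg' =>
    obtain ⟨f, hf, ef⟩ := hg k
    obtain ⟨f', hf', ef'⟩ := hg' k
    exact ⟨f + f', 𝔄.add_mem hf hf', by push_cast [ef, ef']; ring⟩
  | smul a g _ hg =>
    obtain ⟨f, hf, ef⟩ := hg (k * a)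
    exact ⟨f, hf, by rw [ef, smul_eq_mul]; ring⟩

def constMulSubmodule (p : K[X]) : Submodule D K where
  carrier := {c | p * C c ∈ Subtype.val '' (𝔄 : Set (constSubring (algebraMap D K).range))}
  zero_mem' := ⟨0, 𝔄.zero_mem, by simp⟩
  add_mem' := by
    rintro c c' ⟨f, hf, ef⟩ ⟨f', hf', ef'⟩
    exact ⟨f + f', 𝔄.add_mem hf hf', by push_cast [ef, ef']; rw [C_add]; ring⟩
  smul_mem' := by
    rintro d c ⟨f, hf, ef⟩
    refine ⟨⟨C (algebraMap D K d), C_mem_constSubring _ ⟨d, rfl⟩⟩ * f, 𝔄.mul_mem_left _ hf, ?_⟩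
    push_cast [ef]
    rw [Algebra.smul_def, C_mul]
    ring

variable {𝔄} {p : K[X]}

theorem image_eq_mulConstAddX (hp : 𝔄.map (Subring.subtype _) = Ideal.span {p}) :
    Subtype.val '' (𝔄 : Set (constSubring (algebraMap D K).range)) =
      mulConstAddX p (constMulSubmodule 𝔄 p) := by
  have hpX (q : K[X]) :
      p * (X * q) ∈ Subtype.val '' (𝔄 : Set (constSubring (algebraMap D K).range)) := by
    convert X_mul_mul_mem_image_of_mem_map 𝔄 (hp ▸ Ideal.mem_span_singleton_self p) q using 1
    ring
  ext f
  constructor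
  · rintro ⟨f, hf, rfl⟩
    obtain ⟨g, hg : (f : K[X]) = p * g⟩ :=
      Ideal.mem_span_singleton.1 (hp ▸ Ideal.mem_map_of_mem _ hf)
    obtain ⟨f', hf', ef'⟩ := hpX g.divX
    refine ⟨g.coeff 0, ⟨f - f', 𝔄.sub_mem hf hf', ?_⟩, g.divX, ?_⟩
    · push_cast [ef', hg]
      linear_combination (-p) * X_mul_divX_add g
    · linear_combination hg - p * X_mul_divX_add g
  · rintro ⟨c, ⟨f, hf, ef⟩, q, rfl⟩
    obtain ⟨f', hf', ef'⟩ := hpX q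
    exact ⟨f + f', 𝔄.add_mem hf hf', by push_cast [ef, ef']; ring⟩

theorem constMulSubmodule_ne_bot (hp : 𝔄.map (Subring.subtype _) = Ideal.span {p})
    (h𝔄 : 𝔄 ≠ ⊥) : constMulSubmodule 𝔄 p ≠ ⊥ := by
  intro hV
  have hp0 : p ≠ 0 := by
    rintro rfl
    rw [Ideal.span_singleton_eq_bot.2 rfl, Ideal.map_eq_bot_iff_of_injective Subtype.val_injective]
      at hp
    exact h𝔄 hp
  have hle : 𝔄.map (Subring.subtype _) ≤ Ideal.span {p * X} := by
    refine Ideal.map_le_iff_le_comap.2 fun f hf => ?_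
    obtain ⟨c, hc, q, hq⟩ : (f : K[X]) ∈ mulConstAddX p (constMulSubmodule 𝔄 p) :=
      image_eq_mulConstAddX hp ▸ ⟨f, hf, rfl⟩
    rw [hV, Submodule.mem_bot] at hc
    exact Ideal.mem_span_singleton.2 ⟨q, by simp [hq, hc, mul_assoc]⟩
  have hpX : p * X ∣ p * 1 := by
    simpa [Ideal.mem_span_singleton] using hle (hp ▸ Ideal.mem_span_singleton_self p)
  simpa using X_dvd_iff.1 ((mul_dvd_mul_iff_left hp0).1 hpX)

theorem exists_image_eq_mulConstAddX (h𝔄 : 𝔄 ≠ ⊥) :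
    ∃ (s : K[X]) (V : Submodule D K), V ≠ ⊥ ∧
      Subtype.val '' (𝔄 : Set (constSubring (algebraMap D K).range)) = mulConstAddX s V := by
  obtain ⟨p, hp⟩ := (IsPrincipalIdealRing.principal (𝔄.map (Subring.subtype _))).principal
  exact ⟨p, _, constMulSubmodule_ne_bot hp h𝔄, image_eq_mulConstAddX hp⟩

end mulConstAddX

theorem IsCondensed.constSubring_range {D K : Type*} [CommRing D] [IsDomain D] [Field K]
    [Algebra D K] [IsFractionRing D K] (hD : IsCondensed D) :
    IsCondensed (constSubring (algebraMap D K).range) := by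
  intro 𝔄 𝔅 h𝔄 h𝔅 h hh
  obtain ⟨s, V, hV, hA⟩ := exists_image_eq_mulConstAddX h𝔄
  obtain ⟨t, W, -, hB⟩ := exists_image_eq_mulConstAddX h𝔅
  have hst : (h : K[X]) ∈ mulConstAddX (s * t) (V * W) :=
    Submodule.mul_induction_on hh
      (fun f hf g hg => mul_mem_mulConstAddX (hA ▸ ⟨f, hf, rfl⟩) (hB ▸ ⟨g, hg, rfl⟩))
      (fun _ _ => add_mem_mulConstAddX)
  obtain ⟨_, hf, _, hg, hfg⟩ :=
    exists_mul_eq_of_mem_mulConstAddX (fun _ => hD.exists_ne_zero_mul_eq_of_mem_mul hV) hst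
  rw [← hA] at hf
  rw [← hB] at hg
  obtain ⟨f, hf, rfl⟩ := hf
  obtain ⟨g, hg, rfl⟩ := hg
  exact ⟨f, hf, g, hg, Subtype.ext hfg⟩

theorem stmt16 (D : Type*) [CommRing D] [IsDomain D] :
    IsCondensed D ↔ IsCondensed (DplusXKX D) := by
  refine ⟨IsCondensed.constSubring_range, fun h => ?_⟩
  let e : D ≃+* (algebraMap D (FractionRing D)).range :=
    RingEquiv.ofLeftInverse (Function.leftInverse_invFun (IsFractionRing.injective D _))
  exact (IsCondensed.of_constSubring _ h).of_leftInverse e.toRingHom e.symm.toRingHom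
    e.symm_apply_apply
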